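/- arXiv:1408.4984 — 4 statements merged into one kernel-verified Lean document; each statement's English description precedes it below -/
import Mathlib

section
/- Given a pca A, the set A equipped with the application (a,b) ↦ a·b defined inductively by the four clauses (constant function, S-combinator on coded triples, currying of parameters, and application in A, as in the proof of the strictness theorem) is a strict pca, with k′ = [1̄] and s′ = [3̄,[2̄]]. -/
structure PAS (A : Type) where
  app : A → A → Part A

namespace PAS
variable {A : Type}

def app2 (S : PAS A) (a b c : A) : Part A := (S.app a b).bind fun x => S.app x c

def app3 (S : PAS A) (a b c d : A) : Part A := (S.app2 a b c).bind fun x => S.app x d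

def appList (S : PAS A) (a : A) (l : List A) : Part A :=
  l.foldl (fun x b => x.bind fun y => S.app y b) (Part.some a)

end PAS

/-- A partial combinatory algebra: `s a b` is defined, `k a b = a`, and
`s a b c ≳ a c (b c)` (if the right side is defined, so is the left, with equal value). -/
structure PCA (A : Type) where
  pas : PAS A
  k : A
  s : A
  s_def : ∀ a b : A, (pas.app2 s a b).Dom
  k_spec : ∀ a b : A, pas.app2 k a b = Part.some a
  s_spec : ∀ a b c v : A,
    v ∈ ((pas.app a c).bind fun x => (pas.app b c).bind fun y => pas.app x y) →
    v ∈ pas.app3 s a b c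

/-- Applicative morphism of pcas (Longley). -/
structure AppMorphism {A B : Type} (SA : PCA A) (SB : PCA B) where
  rel : A → B → Prop
  total : ∀ a : A, ∃ b : B, rel a b
  r : B
  realizes : ∀ a a' c : A, c ∈ SA.pas.app a a' → ∀ b b' : B, rel a b → rel a' b' →
    (SB.pas.app2 r b b').Dom ∧ ∀ d ∈ SB.pas.app2 r b b', rel c d

/-- The preorder `γ ≼ δ` on applicative morphisms (phrased on the underlying relations). -/
def preceq {A B : Type} (SB : PAS B) (R R' : A → B → Prop) : Prop :=
  ∃ t : B, ∀ a b, R a b → (SB.app t b).Dom ∧ ∀ c ∈ SB.app t b, R' a c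

def releq {A B : Type} (SB : PAS B) (R R' : A → B → Prop) : Prop :=
  preceq SB R R' ∧ preceq SB R' R

/-- Relational composition (composition of applicative morphisms). -/
def relComp {A B C : Type} (R : A → B → Prop) (T : B → C → Prop) : A → C → Prop :=
  fun a c => ∃ b, R a b ∧ T b c

/-- Isomorphism of pcas in the preorder-enriched category PCA. -/
def Isomorphic {A B : Type} (SA : PCA A) (SB : PCA B) : Prop :=
  ∃ (γ : AppMorphism SA SB) (δ : AppMorphism SB SA),
    releq SA.pas (relComp γ.rel δ.rel) (fun a a' => a = a') ∧
    releq SB.pas (relComp δ.rel γ.rel) (fun b b' => b = b')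

/-- A decider for an applicative morphism, relative to chosen booleans. -/
def DecidesRel {A B : Type} (SB : PCA B) (R : A → B → Prop) (TA FA : A) (TB FB : B) : Prop :=
  ∃ d : B, (∀ b, R TA b → SB.pas.app d b = Part.some TB) ∧
    (∀ b, R FA b → SB.pas.app d b = Part.some FB)

/-- A choice of boolean combinators in a pca. -/
structure Booleans {A : Type} (S : PCA A) where
  Tb : A
  Fb : A
  T_spec : ∀ a b : A, S.pas.app2 Tb a b = Part.some a
  F_spec : ∀ a b : A, S.pas.app2 Fb a b = Part.some b

/-- Data needed to build the oracle extension `A[f]`: a pairing combinator,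
booleans, and a coding of tuples. -/
structure OracleData {A : Type} (S : PCA A) where
  pair : A
  Tb : A
  Fb : A
  tup : List A → A
  pair_def : ∀ a b : A, (S.pas.app2 pair a b).Dom
  T_spec : ∀ a b : A, S.pas.app2 Tb a b = Part.some a
  F_spec : ∀ a b : A, S.pas.app2 Fb a b = Part.some b

/-- `u` is an `f`-dialogue between `a` and `b`:
for each `i`, `a ([b] * u^{<i}) = pair F vᵢ` with `f vᵢ = uᵢ`. -/
def IsDialogue {A : Type} (S : PCA A) (D : OracleData S) (f : A → A → Prop)
    (a b : A) (u : List A) : Prop :=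
  ∀ i : ℕ, ∀ h : i < u.length, ∃ v x : A,
    x ∈ S.pas.app a (D.tup (b :: u.take i)) ∧
    x ∈ S.pas.app2 D.pair D.Fb v ∧ f v (u.get ⟨i, h⟩)

/-- The application of the oracle extension `A[f]`: `a ·ᶠ b = c` iff there is a
halting `f`-dialogue, with `a ([b] * u) = pair T c`. -/
def OrApp {A : Type} (S : PCA A) (D : OracleData S) (f : A → A → Prop)
    (a b c : A) : Prop :=
  ∃ u : List A, IsDialogue S D f a b u ∧
    ∃ x : A, x ∈ S.pas.app a (D.tup (b :: u)) ∧ x ∈ S.pas.app2 D.pair D.Tb c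

/-- Index sets relative to an applicative morphism: `I₁^γ(g)`. -/
def I1gamma {A B : Type} (SB : PCA B) (R : A → B → Prop) (g : A → A) : Set B :=
  {b | ∀ a x, R a x → (SB.pas.app b x).Dom ∧ ∀ y ∈ SB.pas.app b x, R (g a) y}

/-- `f ∈ PR_γ`. -/
def PRgamma {A B : Type} (SB : PCA B) (R : A → B → Prop) (f : A → A → Prop) : Prop :=
  ∃ b : B, ∀ a c, f a c → ∀ x, R a x → (SB.pas.app b x).Dom ∧ ∀ y ∈ SB.pas.app b x, R c y

/-- `F ∈ E_γ`: `F` is an effective operation relative to `γ`. -/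
def Egamma {A B : Type} (SB : PCA B) (R : A → B → Prop) (F : (A → A) → Part A) : Prop :=
  ∃ e : B, ∀ g : A → A, (I1gamma SB R g).Nonempty → (F g).Dom →
    ∀ b ∈ I1gamma SB R g, (SB.pas.app e b).Dom ∧
      ∀ y ∈ SB.pas.app e b, ∀ c ∈ F g, R c y

/-- The stagewise family of oracles used to build `A[F]`:
`f₀ = ∅`; `f_{α+1}(a) = F g` whenever `g` is total with index `a` in `A[f_α]`;
unions at limits. -/
noncomputable def stage {A : Type} (S : PCA A) (D : OracleData S)
    (F : (A → A) → Part A) (α : Ordinal.{0}) : A → A → Prop :=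
  Ordinal.limitRecOn (motive := fun _ => A → A → Prop) α
    (fun _ _ => False)
    (fun _ prev => fun a b => ∃ g : A → A, b ∈ F g ∧ ∀ x, OrApp S D prev a x (g x))
    (fun o _ ih => fun a b => ∃ β : Ordinal.{0}, ∃ h : β < o, ih β h a b)

/-- The union `f = ⋃_α f_α` of the stagewise oracles; `A[F] := A[f]`. -/
noncomputable def fullOracle {A : Type} (S : PCA A) (D : OracleData S)
    (F : (A → A) → Part A) : A → A → Prop :=
  fun a b => ∃ α : Ordinal.{0}, stage S D F α a b

/-- `P → Q` for subsets of a partial applicative structure. -/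
def arrowSet {A : Type} (S : PAS A) (P Q : Set A) : Set A :=
  {a | ∀ b ∈ P, (S.app a b).Dom ∧ ∀ c ∈ S.app a b, c ∈ Q}


/-- Strict combinatory completeness witnessed by designated `k`, `s`:
`s a b` defined, `k a b = a`, and `s a b c ≃ a c (b c)` (both sides defined
simultaneously, with equal values). -/
def IsStrictWith {A : Type} (P : PAS A) (k s : A) : Prop :=
  (∀ a b : A, (P.app2 s a b).Dom) ∧
  (∀ a b : A, P.app2 k a b = Part.some a) ∧
  (∀ a b c : A, P.app3 s a b c =
    ((P.app a c).bind fun x => (P.app b c).bind fun y => P.app x y))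

/-- The inductively defined application of the strictness theorem:
constant function (tag `t1`), S-combinator on coded triples (tag `t2`),
currying of parameters (tag `t3`), and application in `A` (tag `t4`). -/
inductive NewApp {A : Type} (S : PAS A) (code : List A → A) (t1 t2 t3 t4 : A) :
    A → A → A → Prop
  | k1 (a : A) : NewApp S code t1 t2 t3 t4 (code [t1]) a (code [t1, a])
  | k2 (a b : A) : NewApp S code t1 t2 t3 t4 (code [t1, a]) b a
  | scomb (a b c x y z : A)
      (h1 : NewApp S code t1 t2 t3 t4 a c x)
      (h2 : NewApp S code t1 t2 t3 t4 b c y)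
      (h3 : NewApp S code t1 t2 t3 t4 x y z) :
      NewApp S code t1 t2 t3 t4 (code [t2]) (code [a, b, c]) z
  | c1 (e a : A) : NewApp S code t1 t2 t3 t4 (code [t3, e]) a (code [t3, e, a])
  | c2 (e a b : A) : NewApp S code t1 t2 t3 t4 (code [t3, e, a]) b (code [t3, e, a, b])
  | c3 (e a b c z : A) (h : NewApp S code t1 t2 t3 t4 e (code [a, b, c]) z) :
      NewApp S code t1 t2 t3 t4 (code [t3, e, a, b]) c z
  | a1 (a : A) : NewApp S code t1 t2 t3 t4 (code [t4]) a (code [t4, a])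
  | a2 (a b z : A) (h : z ∈ S.app a b) : NewApp S code t1 t2 t3 t4 (code [t4, a]) b z


/-!
The left-hand sides `code l` of distinct clauses have lists `l` that differ in length or in their
tag, so by injectivity of `code` at most one clause applies to any `u · b` and the relation is the
graph of a partial function. The combinator laws then hold clause by clause: `[1̄] a b = a`, and
`[3̄,[2̄]] a b` is the always defined `[3̄,[2̄],a,b]`, whose application to `c` is
`[2̄] [a,b,c] ≃ a c (b c)`.
-/

namespace PAS

variable {A : Type}

/-- Its graph is `R` only when `R` is functional, see `mem_ofRel_app`. -/
noncomputable def ofRel (R : A → A → A → Prop) : PAS A :=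
  ⟨fun a b => ⟨∃ z, R a b z, fun h => h.choose⟩⟩

variable {R : A → A → A → Prop} (hR : ∀ a b z z', R a b z → R a b z' → z = z')
include hR

theorem mem_ofRel_app {a b z : A} : z ∈ (ofRel R).app a b ↔ R a b z :=
  ⟨fun ⟨h, hz⟩ => hz ▸ h.choose_spec, fun hz => ⟨⟨z, hz⟩, hR _ _ _ _ (Exists.choose_spec _) hz⟩⟩

theorem ofRel_app_eq_some {a b z : A} (h : R a b z) : (ofRel R).app a b = Part.some z :=
  Part.eq_some_iff.2 ((mem_ofRel_app hR).2 h)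

end PAS

namespace NewApp

variable {A : Type} {S : PAS A} {code : List A → A} {t1 t2 t3 t4 : A}

theorem functional (hinj : Function.Injective code) (h12 : t1 ≠ t2) (h13 : t1 ≠ t3)
    (h14 : t1 ≠ t4) (h24 : t2 ≠ t4) (h34 : t3 ≠ t4) {u b z z' : A}
    (h : NewApp S code t1 t2 t3 t4 u b z) (h' : NewApp S code t1 t2 t3 t4 u b z') : z = z' := by
  suffices ∀ {u' b' z'}, NewApp S code t1 t2 t3 t4 u' b' z' → u = u' → b = b' → z = z' from
    this h' rfl rfl
  clear h'
  induction h <;> intro u' b' z' h' <;> cases h' <;> intro hu hb <;>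
    grind [hinj.eq_iff, Part.mem_unique]

theorem curry_iff (hinj : Function.Injective code) {e a b c z : A} :
    NewApp S code t1 t2 t3 t4 (code [t3, e, a, b]) c z ↔
      NewApp S code t1 t2 t3 t4 e (code [a, b, c]) z := by
  refine ⟨fun h => ?_, c3 e a b c z⟩
  generalize hu : code [t3, e, a, b] = u at h
  cases h <;> simp_all [hinj.eq_iff]

theorem scomb_iff (hinj : Function.Injective code) (h12 : t1 ≠ t2) (h24 : t2 ≠ t4)
    {a b c z : A} :
    NewApp S code t1 t2 t3 t4 (code [t2]) (code [a, b, c]) z ↔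
      ∃ x, NewApp S code t1 t2 t3 t4 a c x ∧
        ∃ y, NewApp S code t1 t2 t3 t4 b c y ∧ NewApp S code t1 t2 t3 t4 x y z := by
  refine ⟨fun h => ?_, fun ⟨x, hx, y, hy, hz⟩ => scomb a b c x y z hx hy hz⟩
  generalize hu : code [t2] = u at h
  generalize hv : code [a, b, c] = v at h
  cases h <;> grind [hinj.eq_iff]

end NewApp

theorem newApp_strict_pca_general {A : Type} (SA : PCA A) (code : List A → A)
    (hinj : Function.Injective code) (t1 t2 t3 t4 : A)
    (h12 : t1 ≠ t2) (h13 : t1 ≠ t3) (h14 : t1 ≠ t4)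
    (h24 : t2 ≠ t4) (h34 : t3 ≠ t4) :
    ∃ SB : PAS A,
      (∀ a b z : A, z ∈ SB.app a b ↔ NewApp SA.pas code t1 t2 t3 t4 a b z) ∧
      IsStrictWith SB (code [t1]) (code [t3, code [t2]]) := by
  have hfun : ∀ u b z z', NewApp SA.pas code t1 t2 t3 t4 u b z →
      NewApp SA.pas code t1 t2 t3 t4 u b z' → z = z' :=
    fun _ _ _ _ => NewApp.functional hinj h12 h13 h14 h24 h34
  have happ : ∀ {a b z}, NewApp SA.pas code t1 t2 t3 t4 a b z → (PAS.ofRel _).app a b = .some z :=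
    PAS.ofRel_app_eq_some hfun
  refine ⟨PAS.ofRel _, fun a b z => PAS.mem_ofRel_app hfun, fun a b => ?_, fun a b => ?_,
    fun a b c => ?_⟩
  · simp only [PAS.app2, happ (.c1 _ a), Part.bind_some, happ (.c2 _ a b), Part.some_dom]
  · rw [PAS.app2, happ (.k1 a), Part.bind_some, happ (.k2 a b)]
  · rw [PAS.app3, PAS.app2, happ (.c1 _ a), Part.bind_some, happ (.c2 _ a b), Part.bind_some]
    ext z
    simp only [Part.mem_bind_iff, PAS.mem_ofRel_app hfun, NewApp.curry_iff hinj,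
      NewApp.scomb_iff hinj h12 h24]

/-- the inductively defined application (constant function,
S-combinator on coded triples, currying, and application in `A`) is a strict
pca with `k' = [1̄]` and `s' = [3̄,[2̄]]`. -/
theorem newApp_strict_pca {A : Type} (SA : PCA A) (code : List A → A)
    (hinj : Function.Injective code) (t1 t2 t3 t4 : A)
    (h12 : t1 ≠ t2) (h13 : t1 ≠ t3) (h14 : t1 ≠ t4)
    (h23 : t2 ≠ t3) (h24 : t2 ≠ t4) (h34 : t3 ≠ t4) :
    ∃ SB : PAS A,
      (∀ a b z : A, z ∈ SB.app a b ↔ NewApp SA.pas code t1 t2 t3 t4 a b z) ∧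
      IsStrictWith SB (code [t1]) (code [t3, code [t2]]) :=
  newApp_strict_pca_general SA code hinj t1 t2 t3 t4 h12 h13 h14 h24 h34
end

section
/- For a pca A and a partial functional F: A^A → A, the family of partial functions (f_α) indexed by ordinals, defined by f₀ = ∅, f_{α+1}(a) = b whenever there exists g ∈ Tot_{A[f_α]} with a ∈ I₁^{A[f_α]}(g) and F(g) = b, and f_λ = ⋃_{α<λ} f_α at limits, is a compatible family: α ≤ β implies f_α ⊆ f_β (as partial functions). -/
/-
The successor step `Φ f := {(a, F g) | g is total and computed by a in A[f]}` (`stageSucc`) is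
monotone in the oracle `f`, because an `f`-dialogue is also an `f'`-dialogue whenever `f ⊆ f'`.
The stages are the transfinite iterates of `Φ` from `∅`, taking unions at limits, and such iterates
of a monotone map always increase: `f_o ⊆ f_{o+1}` follows by induction on `o` (at a limit `λ`,
each `f_p ⊆ f_{p+1} = Φ f_p` lies in `Φ f_λ`), and then `f_α ⊆ f_β` by induction on `β`.
-/

namespace Ordinal

universe u

variable {X : Type*} [Preorder X] {Φ : X → X} {f : Ordinal.{u} → X}

theorem le_add_one_of_transfinite_iterate (hΦ : Monotone Φ) (hzero : ∀ x, f 0 ≤ x)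
    (hsucc : ∀ o, f (o + 1) = Φ (f o))
    (hlimit : ∀ o, Order.IsSuccLimit o → IsLUB (f '' Set.Iio o) (f o)) (o : Ordinal.{u}) :
    f o ≤ f (o + 1) := by
  induction o using Ordinal.limitRecOn with
  | zero => exact hzero _
  | add_one p ih =>
    calc f (p + 1) = Φ (f p) := hsucc p
      _ ≤ Φ (f (p + 1)) := hΦ ih
      _ = f (p + 1 + 1) := (hsucc _).symm
  | limit o ho ih =>
    refine (hlimit o ho).2 ?_
    rintro _ ⟨p, hp, rfl⟩
    calc f p ≤ f (p + 1) := ih p hp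
      _ = Φ (f p) := hsucc p
      _ ≤ Φ (f o) := hΦ ((hlimit o ho).1 ⟨p, hp, rfl⟩)
      _ = f (o + 1) := (hsucc o).symm

theorem monotone_of_transfinite_iterate (hΦ : Monotone Φ) (hzero : ∀ x, f 0 ≤ x)
    (hsucc : ∀ o, f (o + 1) = Φ (f o))
    (hlimit : ∀ o, Order.IsSuccLimit o → IsLUB (f '' Set.Iio o) (f o)) : Monotone f := by
  intro α β hαβ
  induction β using Ordinal.limitRecOn with
  | zero => rw [nonpos_iff_eq_zero.mp hαβ]
  | add_one γ ih =>
    rcases Order.le_succ_iff_eq_or_le.mp (Order.succ_eq_add_one γ ▸ hαβ) with rfl | hαγ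
    · exact le_of_eq (congrArg f (Order.succ_eq_add_one γ))
    · exact (ih hαγ).trans (le_add_one_of_transfinite_iterate hΦ hzero hsucc hlimit γ)
  | limit γ hγ _ =>
    rcases hαβ.lt_or_eq with hαγ | rfl
    · exact (hlimit γ hγ).1 ⟨α, hαγ, rfl⟩
    · exact le_rfl

end Ordinal

section Stages

variable {A : Type} (S : PCA A) (D : OracleData S)

theorem IsDialogue.mono {f f' : A → A → Prop} (hf : f ≤ f') {a b : A} {u : List A}
    (h : IsDialogue S D f a b u) : IsDialogue S D f' a b u := fun i hi =>
  let ⟨v, x, hx, hpair, hv⟩ := h i hi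
  ⟨v, x, hx, hpair, hf _ _ hv⟩

theorem OrApp.mono {f f' : A → A → Prop} (hf : f ≤ f') {a b c : A}
    (h : OrApp S D f a b c) : OrApp S D f' a b c :=
  let ⟨u, hu, hhalt⟩ := h
  ⟨u, hu.mono S D hf, hhalt⟩

variable (F : (A → A) → Part A)

def stageSucc (f : A → A → Prop) : A → A → Prop :=
  fun a b => ∃ g : A → A, b ∈ F g ∧ ∀ x, OrApp S D f a x (g x)

theorem monotone_stageSucc : Monotone (stageSucc S D F) :=
  fun _ _ hf _ _ ⟨g, hg, hidx⟩ => ⟨g, hg, fun x => (hidx x).mono S D hf⟩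

theorem stage_zero_le (f : A → A → Prop) : stage S D F 0 ≤ f :=
  fun a b h => by rw [stage, Ordinal.limitRecOn_zero] at h; exact h.elim

theorem stage_add_one (o : Ordinal.{0}) :
    stage S D F (o + 1) = stageSucc S D F (stage S D F o) :=
  Ordinal.limitRecOn_add_one ..

theorem isLUB_stage_of_isSuccLimit {o : Ordinal.{0}} (ho : Order.IsSuccLimit o) :
    IsLUB (stage S D F '' Set.Iio o) (stage S D F o) := by
  have hunion : stage S D F o = fun a b => ∃ p, ∃ _ : p < o, stage S D F p a b :=
    Ordinal.limitRecOn_limit _ _ _ _ ho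
  rw [hunion]
  constructor
  · rintro _ ⟨p, hp, rfl⟩ a b h
    exact ⟨p, hp, h⟩
  · intro f hf a b ⟨p, hp, h⟩
    exact hf ⟨p, hp, rfl⟩ a b h

end Stages

/-- the stagewise family `(f_α)` used to construct `A[F]` is
compatible: `α ≤ β` implies `f_α ⊆ f_β` (as partial functions / graphs). -/
theorem stage_monotone {A : Type} (S : PCA A) (D : OracleData S)
    (F : (A → A) → Part A) (α β : Ordinal.{0}) (h : α ≤ β) :
    ∀ a b : A, stage S D F α a b → stage S D F β a b :=
  Ordinal.monotone_of_transfinite_iterate (monotone_stageSucc S D F) (stage_zero_le S D F)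
    (stage_add_one S D F) (fun _ => isLUB_stage_of_isSuccLimit S D F) h
end

section
/- If J is a local operator on a pca A and one defines J′(P) = ⋃_{Q ⊆ P} J(Q), then J′ is a local operator, J′ preserves inclusions (P ⊆ P′ implies J′(P) ⊆ J′(P′)), and J′ ≅ J. -/
/-- A local operator on a pca. -/
def IsLocalOp {A : Type} (S : PAS A) (J : Set A → Set A) : Prop :=
  (∃ e1 : A, ∀ P : Set A, e1 ∈ arrowSet S P (J P)) ∧
  (∃ e2 : A, ∀ P : Set A, e2 ∈ arrowSet S (J (J P)) (J P)) ∧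
  (∃ e3 : A, ∀ P Q : Set A, e3 ∈ arrowSet S (arrowSet S P Q) (arrowSet S (J P) (J Q)))

/-- The preorder on local operators. -/
def opLE {A : Type} (S : PAS A) (J J' : Set A → Set A) : Prop :=
  ∃ e : A, ∀ P : Set A, e ∈ arrowSet S (J P) (J' P)


/-! `J' P := ⋃_{Q ⊆ P} J Q` contains `J P`, and `J` is monotone up to a uniform realizer:
`e₃ i`, for `i` the identity combinator, realizes `J Q → J P` whenever `Q ⊆ P`. This gives both
comparisons `J ≤ J'` (by `i`) and `J' ≤ J` (by `e₃ i`). The operator `J'` inherits `e₁` and `e₃`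
from `J` directly, and `e₂` becomes `e₂ ∘ e₃ (e₃ i)`, since `e₃ i` realizes `J' P → J P`. -/

namespace PAS

variable {A : Type} (S : PAS A)

theorem arrowSet_mono {P P' Q Q' : Set A} (hP : P' ⊆ P) (hQ : Q ⊆ Q') :
    arrowSet S P Q ⊆ arrowSet S P' Q' :=
  fun _ ha b hb => ⟨(ha b (hP hb)).1, fun c hc => hQ ((ha b (hP hb)).2 c hc)⟩

theorem mem_arrowSet_of_forall_app_eq_some {i : A} (hi : ∀ a, S.app i a = Part.some a)
    {P Q : Set A} (h : P ⊆ Q) : i ∈ arrowSet S P Q := by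
  intro b hb
  rw [hi b]
  exact ⟨trivial, fun c hc => Part.mem_some_iff.1 hc ▸ h hb⟩

end PAS

namespace PCA

variable {A : Type} (S : PCA A)

theorem exists_app_k (a : A) :
    ∃ ka ∈ S.pas.app S.k a, ∀ b, S.pas.app ka b = Part.some a := by
  have hmem : ∀ b, a ∈ S.pas.app2 S.k a b := fun b => by rw [S.k_spec]; exact Part.mem_some a
  obtain ⟨ka, hka, -⟩ := Part.mem_bind_iff.1 (hmem a)
  refine ⟨ka, hka, fun b => Part.eq_some_iff.2 ?_⟩
  obtain ⟨ka', hka', hb⟩ := Part.mem_bind_iff.1 (hmem b)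
  rwa [Part.mem_unique hka' hka] at hb

theorem exists_app_s (a b : A) : ∃ sab : A, ∀ c v,
    v ∈ ((S.pas.app a c).bind fun x => (S.pas.app b c).bind fun y => S.pas.app x y) →
    S.pas.app sab c = Part.some v := by
  refine ⟨(S.pas.app2 S.s a b).get (S.s_def a b), fun c v hv => Part.eq_some_iff.2 ?_⟩
  obtain ⟨x, hx, hxc⟩ := Part.mem_bind_iff.1 (S.s_spec a b c v hv)
  rwa [← Part.mem_unique (Part.get_mem (S.s_def a b)) hx] at hxc

theorem exists_id : ∃ i : A, ∀ a, S.pas.app i a = Part.some a := by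
  obtain ⟨i, hi⟩ := S.exists_app_s S.k S.k
  refine ⟨i, fun a => hi a a ?_⟩
  obtain ⟨ka, hka, hkab⟩ := S.exists_app_k a
  refine Part.mem_bind_iff.2 ⟨ka, hka, Part.mem_bind_iff.2 ⟨ka, hka, ?_⟩⟩
  rw [hkab]
  exact Part.mem_some a

theorem exists_comp (f g : A) : ∃ c : A, ∀ x y v,
    y ∈ S.pas.app g x → v ∈ S.pas.app f y → S.pas.app c x = Part.some v := by
  obtain ⟨kf, -, hkf⟩ := S.exists_app_k f
  obtain ⟨c, hc⟩ := S.exists_app_s kf g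
  refine ⟨c, fun x y v hy hv => hc x v ?_⟩
  rw [hkf]
  exact Part.mem_bind_iff.2 ⟨f, Part.mem_some f, Part.mem_bind_iff.2 ⟨y, hy, hv⟩⟩

theorem exists_comp_mem_arrowSet (f g : A) : ∃ c : A, ∀ P Q R : Set A,
    g ∈ arrowSet S.pas P Q → f ∈ arrowSet S.pas Q R → c ∈ arrowSet S.pas P R := by
  obtain ⟨c, hc⟩ := S.exists_comp f g
  refine ⟨c, fun P Q R hg hf b hb => ?_⟩
  obtain ⟨hgb, hgbQ⟩ := hg b hb
  have hy := Part.get_mem hgb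
  obtain ⟨hfy, hfyR⟩ := hf _ (hgbQ _ hy)
  have hv := Part.get_mem hfy
  rw [hc b _ _ hy hv]
  exact ⟨trivial, fun v hv' => Part.mem_some_iff.1 hv' ▸ hfyR _ hv⟩

theorem opLE_of_le {J J' : Set A → Set A} (h : ∀ P, J P ⊆ J' P) : opLE S.pas J J' := by
  obtain ⟨i, hi⟩ := S.exists_id
  exact ⟨i, fun P => PAS.mem_arrowSet_of_forall_app_eq_some S.pas hi (h P)⟩

end PCA

def monotonize {A : Type} (J : Set A → Set A) (P : Set A) : Set A :=
  {a | ∃ Q ⊆ P, a ∈ J Q}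

section Monotonize

variable {A : Type} {J : Set A → Set A}

theorem subset_monotonize (P : Set A) : J P ⊆ monotonize J P :=
  fun _ ha => ⟨P, subset_rfl, ha⟩

theorem monotonize_mono {P P' : Set A} (h : P ⊆ P') : monotonize J P ⊆ monotonize J P' :=
  fun _ ⟨Q, hQ, ha⟩ => ⟨Q, hQ.trans h, ha⟩

theorem mem_arrowSet_monotonize_iff (S : PAS A) {P R : Set A} {a : A} :
    a ∈ arrowSet S (monotonize J P) R ↔ ∀ Q ⊆ P, a ∈ arrowSet S (J Q) R :=
  ⟨fun ha Q hQ b hb => ha b ⟨Q, hQ, hb⟩, fun ha _ ⟨Q, hQ, hb⟩ => ha Q hQ _ hb⟩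

end Monotonize

namespace IsLocalOp

variable {A : Type} {J : Set A → Set A}

theorem exists_lift {S : PAS A} (hJ : IsLocalOp S J) (r : A) :
    ∃ r' : A, ∀ P Q, r ∈ arrowSet S P Q → r' ∈ arrowSet S (J P) (J Q) := by
  obtain ⟨-, -, e3, he3⟩ := hJ
  have hdom : (S.app e3 r).Dom := (he3 ∅ ∅ r fun _ hb => hb.elim).1
  exact ⟨_, fun P Q hr => (he3 P Q r hr).2 _ (Part.get_mem hdom)⟩

theorem exists_mono_realizer {S : PCA A} (hJ : IsLocalOp S.pas J) :
    ∃ t : A, ∀ Q P, Q ⊆ P → t ∈ arrowSet S.pas (J Q) (J P) := by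
  obtain ⟨i, hi⟩ := S.exists_id
  obtain ⟨t, ht⟩ := hJ.exists_lift i
  exact ⟨t, fun Q P h => ht Q P (PAS.mem_arrowSet_of_forall_app_eq_some S.pas hi h)⟩

theorem exists_monotonize_realizer {S : PCA A} (hJ : IsLocalOp S.pas J) :
    ∃ t : A, ∀ P, t ∈ arrowSet S.pas (_root_.monotonize J P) (J P) := by
  obtain ⟨t, ht⟩ := hJ.exists_mono_realizer
  exact ⟨t, fun P => (mem_arrowSet_monotonize_iff S.pas).2 fun Q hQ => ht Q P hQ⟩

theorem monotonize {S : PCA A} (hJ : IsLocalOp S.pas J) :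
    IsLocalOp S.pas (_root_.monotonize J) := by
  obtain ⟨t, ht⟩ := hJ.exists_monotonize_realizer
  obtain ⟨t₂, ht₂⟩ := hJ.exists_lift t
  obtain ⟨⟨e1, he1⟩, ⟨e2, he2⟩, ⟨e3, he3⟩⟩ := hJ
  obtain ⟨e2', he2'⟩ := S.exists_comp_mem_arrowSet e2 t₂
  refine ⟨⟨e1, fun P => PAS.arrowSet_mono S.pas subset_rfl (subset_monotonize P) (he1 P)⟩,
    ⟨e2', fun P => ?_⟩, ⟨e3, fun P Q r hr => ⟨(he3 P Q r hr).1, fun c hc => ?_⟩⟩⟩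
  · have ht₂P : t₂ ∈ arrowSet S.pas (_root_.monotonize J (_root_.monotonize J P)) (J (J P)) :=
      (mem_arrowSet_monotonize_iff S.pas).2 fun Q hQ =>
        ht₂ Q (J P) (PAS.arrowSet_mono S.pas hQ subset_rfl (ht P))
    exact he2' _ _ _ ht₂P (PAS.arrowSet_mono S.pas subset_rfl (subset_monotonize P) (he2 P))
  · refine (mem_arrowSet_monotonize_iff S.pas).2 fun R hR => ?_
    have hrR := PAS.arrowSet_mono S.pas hR subset_rfl hr
    exact PAS.arrowSet_mono S.pas subset_rfl (subset_monotonize Q) ((he3 R Q r hrR).2 c hc)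

end IsLocalOp

/-- `J' P := ⋃_{Q ⊆ P} J Q` is a local operator, preserves
inclusions, and is isomorphic to `J`. -/
theorem localOp_monotone_replacement {A : Type} (S : PCA A) (J : Set A → Set A)
    (hJ : IsLocalOp S.pas J) :
    IsLocalOp S.pas (fun P => {a | ∃ Q ⊆ P, a ∈ J Q}) ∧
    (∀ P P' : Set A, P ⊆ P' →
      {a | ∃ Q ⊆ P, a ∈ J Q} ⊆ {a | ∃ Q ⊆ P', a ∈ J Q}) ∧
    opLE S.pas J (fun P => {a | ∃ Q ⊆ P, a ∈ J Q}) ∧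
    opLE S.pas (fun P => {a | ∃ Q ⊆ P, a ∈ J Q}) J :=
  ⟨hJ.monotonize, fun _ _ => monotonize_mono, S.opLE_of_le subset_monotonize,
    hJ.exists_monotonize_realizer⟩
end

section
/- For distinct natural numbers n ≠ m, J{n} ∩ J{m} = ∅, where J is Pitts' local operator on K₁. -/
/-- Kleene's first model as a partial applicative structure. -/
def K1pas : PAS ℕ :=
  ⟨fun n m => Nat.Partrec.Code.eval (Denumerable.ofNat Nat.Partrec.Code n) m⟩

/-- Pitts' local operator on `K₁`. -/
def pittsJ (P : Set ℕ) : Set ℕ :=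
  ⋂₀ {Q : Set ℕ | (∀ p ∈ P, Nat.pair 0 p ∈ Q) ∧
      (∀ n e : ℕ, e ∈ arrowSet K1pas {m | n ≤ m} Q → Nat.pair 1 e ∈ Q)}


/-!
`J P` is the least set closed under its two rules, so membership can be inverted: every element
is `⟨0, p⟩` with `p ∈ P` or `⟨1, e⟩` with `e` realizing `{m | k ≤ m} → J P`. Disjointness of
`J P` and `J P'` then follows by induction on `J P` against `(J P')ᶜ`: a realizer sending every
`m ≥ k` outside `J P'` cannot equal one sending every `m ≥ k'` into `J P'`, as both are defined
at `max k k'`.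
-/

section ArrowSet

variable {A : Type} {S : PAS A}

theorem arrowSet_mono_right {P Q Q' : Set A} (hQ : Q ⊆ Q') : arrowSet S P Q ⊆ arrowSet S P Q' :=
  fun _ ha b hb => ⟨(ha b hb).1, fun c hc => hQ ((ha b hb).2 c hc)⟩

theorem disjoint_arrowSet {P P' Q Q' : Set A} (hP : (P ∩ P').Nonempty) (hQ : Disjoint Q Q') :
    Disjoint (arrowSet S P Q) (arrowSet S P' Q') := by
  refine Set.disjoint_left.2 fun a ha ha' => ?_
  obtain ⟨b, hb, hb'⟩ := hP
  obtain ⟨hdom, hQb⟩ := ha b hb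
  have hc := Part.get_mem hdom
  exact Set.disjoint_left.1 hQ (hQb _ hc) ((ha' b hb').2 _ hc)

end ArrowSet

section PittsJ

variable {P : Set ℕ}

theorem pittsJ_subset {Q : Set ℕ} (h0 : ∀ p ∈ P, Nat.pair 0 p ∈ Q)
    (h1 : ∀ k e : ℕ, e ∈ arrowSet K1pas {m | k ≤ m} Q → Nat.pair 1 e ∈ Q) : pittsJ P ⊆ Q :=
  Set.sInter_subset_of_mem ⟨h0, h1⟩

theorem pair_zero_mem_pittsJ {p : ℕ} (hp : p ∈ P) : Nat.pair 0 p ∈ pittsJ P :=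
  Set.mem_sInter.2 fun _ hQ => hQ.1 p hp

theorem pair_one_mem_pittsJ {k e : ℕ} (he : e ∈ arrowSet K1pas {m | k ≤ m} (pittsJ P)) :
    Nat.pair 1 e ∈ pittsJ P :=
  Set.mem_sInter.2 fun _ hQ => hQ.2 k e (arrowSet_mono_right (Set.sInter_subset_of_mem hQ) he)

theorem mem_pittsJ_iff {a : ℕ} :
    a ∈ pittsJ P ↔ (∃ p ∈ P, Nat.pair 0 p = a) ∨
      ∃ k e : ℕ, e ∈ arrowSet K1pas {m | k ≤ m} (pittsJ P) ∧ Nat.pair 1 e = a := by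
  refine ⟨fun ha => ?_, ?_⟩
  · set C := {a | (∃ p ∈ P, Nat.pair 0 p = a) ∨
      ∃ k e : ℕ, e ∈ arrowSet K1pas {m | k ≤ m} (pittsJ P) ∧ Nat.pair 1 e = a}
    have hCJ : C ⊆ pittsJ P := by
      rintro _ (⟨p, hp, rfl⟩ | ⟨k, e, he, rfl⟩)
      exacts [pair_zero_mem_pittsJ hp, pair_one_mem_pittsJ he]
    refine pittsJ_subset (Q := C) (fun p hp => Or.inl ⟨p, hp, rfl⟩)
      (fun k e he => Or.inr ⟨k, e, arrowSet_mono_right hCJ he, rfl⟩) ha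
  · rintro (⟨p, hp, rfl⟩ | ⟨k, e, he, rfl⟩)
    exacts [pair_zero_mem_pittsJ hp, pair_one_mem_pittsJ he]

theorem disjoint_pittsJ {P' : Set ℕ} (h : Disjoint P P') : Disjoint (pittsJ P) (pittsJ P') := by
  rw [← le_compl_iff_disjoint_right]
  refine pittsJ_subset (fun p hp hp' => ?_) (fun k e he he' => ?_)
  · rcases mem_pittsJ_iff.1 hp' with ⟨p', hp', hpp'⟩ | ⟨_, _, _, hpe⟩
    · rw [Nat.pair_eq_pair] at hpp'
      exact Set.disjoint_left.1 h hp (hpp'.2 ▸ hp')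
    · exact absurd (Nat.pair_eq_pair.1 hpe).1 one_ne_zero
  · rcases mem_pittsJ_iff.1 he' with ⟨_, _, hpe⟩ | ⟨k', e', he'', hee'⟩
    · exact absurd (Nat.pair_eq_pair.1 hpe).1 zero_ne_one
    · rw [Nat.pair_eq_pair] at hee'
      have hmax : ({m | k ≤ m} ∩ {m | k' ≤ m}).Nonempty :=
        ⟨max k k', le_max_left k k', le_max_right k k'⟩
      exact Set.disjoint_left.1 (disjoint_arrowSet hmax disjoint_compl_left) he (hee'.2 ▸ he'')

end PittsJ

/-- for `n ≠ m`, `J{n} ∩ J{m} = ∅` for Pitts' local operator. -/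
theorem pittsJ_disjoint {n m : ℕ} (h : n ≠ m) :
    pittsJ {n} ∩ pittsJ {m} = ∅ :=
  Set.disjoint_iff_inter_eq_empty.1 (disjoint_pittsJ (Set.disjoint_singleton.2 h))
end
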